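/- arXiv:2302.08403 — 2 statements merged into one kernel-verified Lean document; each statement's English description precedes it below -/
import Mathlib

section
/- dim_H(Θ²) ≤ 7/5. -/
open Filter Set Topology
open scoped ENNReal

noncomputable section

namespace BestApprox

/-- For `ξ ∈ ℝ^m`, the vector `ξ* = (ξ, 1) ∈ ℝ^{m+1}`. -/
def star {m : ℕ} (ξ : Fin m → ℝ) : Fin (m + 1) → ℝ := Fin.snoc ξ 1

/-- For `q ∈ ℤ^{m+1}`, the vector `q̂ ∈ ℤ^m` of its first `m` coordinates. -/
def hat {m : ℕ} (q : Fin (m + 1) → ℤ) : Fin m → ℤ := fun i => q i.castSucc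

/-- View an integer vector as a real vector. -/
def realVec {k : ℕ} (q : Fin k → ℤ) : Fin k → ℝ := fun i => (q i : ℝ)

/-- `|q ⬝ ξ*|`, the absolute value of the linear form. -/
def linForm {m : ℕ} (ξ : Fin m → ℝ) (q : Fin (m + 1) → ℤ) : ℝ :=
  |∑ i, (q i : ℝ) * star ξ i|

/-- `ξ` is totally irrational: `q ⬝ ξ* ≠ 0` for every nonzero integer vector `q`. -/
def TotallyIrrational {m : ℕ} (ξ : Fin m → ℝ) : Prop :=
  ∀ q : Fin (m + 1) → ℤ, q ≠ 0 → (∑ i, (q i : ℝ) * star ξ i) ≠ 0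

/-- `q` is a best approximation for `ξ` (max norm on the first `m` coordinates). -/
def IsBestApprox {m : ℕ} (ξ : Fin m → ℝ) (q : Fin (m + 1) → ℤ) : Prop :=
  hat q ≠ 0 ∧
    ∀ b : Fin (m + 1) → ℤ, hat b ≠ 0 → ‖hat b‖ ≤ ‖hat q‖ → linForm ξ q ≤ linForm ξ b

/-- `Q` is the sequence of best approximations of `ξ`, ordered by increasing norm,
each best approximation occurring (up to sign) exactly once. -/
def IsBestApproxSeq {m : ℕ} (ξ : Fin m → ℝ) (Q : ℕ → Fin (m + 1) → ℤ) : Prop :=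
  (∀ j, IsBestApprox ξ (Q j)) ∧
    (∀ j, ‖hat (Q j)‖ < ‖hat (Q (j + 1))‖) ∧
    (∀ j, linForm ξ (Q (j + 1)) < linForm ξ (Q j)) ∧
    (∀ b, IsBestApprox ξ b → ∃ j, b = Q j ∨ b = -Q j)

/-- Some tail of the best approximation sequence of `ξ` lies in `S`. -/
def HasTailIn {m : ℕ} (ξ : Fin m → ℝ) (S : Set (Fin (m + 1) → ℤ)) : Prop :=
  ∃ Q : ℕ → Fin (m + 1) → ℤ, IsBestApproxSeq ξ Q ∧ ∃ j₀ : ℕ, ∀ j ≥ j₀, Q j ∈ S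

/-- `R(ξ)`: the minimal `R` such that some tail of the best approximation sequence
lies in an `R`-dimensional sublattice of `ℤ^{m+1}`. -/
def Rexp {m : ℕ} (ξ : Fin m → ℝ) : ℕ :=
  sInf {R : ℕ | ∃ L : Submodule ℤ (Fin (m + 1) → ℤ),
    Module.finrank ℤ L = R ∧ HasTailIn ξ (L : Set (Fin (m + 1) → ℤ))}

/-- `Γₙ`: totally irrational `ξ ∈ ℝⁿ` with `R(ξ) = 3`. -/
def Gamma (n : ℕ) : Set (Fin n → ℝ) := {ξ | TotallyIrrational ξ ∧ Rexp ξ = 3}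

/-- `Γ_{n,k}`: totally irrational `ξ ∈ ℝⁿ` with `R(ξ) ≤ k`. -/
def GammaNK (n k : ℕ) : Set (Fin n → ℝ) := {ξ | TotallyIrrational ξ ∧ Rexp ξ ≤ k}

/-- `min{|b ⬝ ξ*| : 0 < ‖b̂‖ ≤ Q}`. -/
def minForm {m : ℕ} (ξ : Fin m → ℝ) (Q : ℝ) : ℝ :=
  sInf {r : ℝ | ∃ b : Fin (m + 1) → ℤ, hat b ≠ 0 ∧ ‖hat b‖ ≤ Q ∧ r = linForm ξ b}

/-- The uniform exponent `ŵ(ξ)` (as an extended real number). -/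
def uexp {m : ℕ} (ξ : Fin m → ℝ) : EReal :=
  sSup {t : EReal | ∃ t' : ℝ, t = (t' : EReal) ∧ 0 < t' ∧
    ∃ C : ℝ, ∀ᶠ Q : ℝ in atTop, Q ^ t' * minForm ξ Q ≤ C}

/-- The ordinary exponent `ω(ξ)` (as an extended real number). -/
def oexp {m : ℕ} (ξ : Fin m → ℝ) : EReal :=
  sSup {t : EReal | ∃ t' : ℝ, t = (t' : EReal) ∧ 0 < t' ∧
    ∃ C : ℝ, ∃ᶠ Q : ℝ in atTop, Q ^ t' * minForm ξ Q ≤ C}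

/-- `H_i ⊆ ℤ^{n+1}`: the two-dimensional sublattice spanned by `e_i` and `e_{n+1}`,
i.e. integer vectors all of whose coordinates vanish except possibly the `i`-th
and the last one. -/
def Hlat (n : ℕ) (i : Fin (n + 1)) : Set (Fin (n + 1) → ℤ) :=
  {q | ∀ j : Fin (n + 1), j ≠ i → j ≠ Fin.last n → q j = 0}

/-- `Θⁿ`: totally irrational `ξ ∈ ℝⁿ` whose tail of best approximations lies in
`H₁ ∪ H₂`, alternately, with any three consecutive ones linearly independent. -/
def Theta (n : ℕ) : Set (Fin n → ℝ) :=
  {ξ | TotallyIrrational ξ ∧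
    ∃ Q : ℕ → Fin (n + 1) → ℤ, IsBestApproxSeq ξ Q ∧
      ∃ j₀ : ℕ,
        (∀ j ≥ j₀, Q j ∈ Hlat n 0 ∪ Hlat n 1) ∧
        (∀ j ≥ j₀, ¬(Q j ∈ Hlat n 0 ∧ Q (j + 1) ∈ Hlat n 0) ∧
          ¬(Q j ∈ Hlat n 1 ∧ Q (j + 1) ∈ Hlat n 1)) ∧
        (∀ j ≥ j₀, LinearIndependent ℝ
          ![realVec (Q j), realVec (Q (j + 1)), realVec (Q (j + 2))])}

/-- `Θₙ(w)` for real `w`: elements of `Θⁿ` with `ŵ(ξ) = w` and `ω(ξ) = w²`. -/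
def ThetaW (n : ℕ) (w : ℝ) : Set (Fin n → ℝ) :=
  {ξ | ξ ∈ Theta n ∧ uexp ξ = (w : EReal) ∧ oexp ξ = ((w ^ 2 : ℝ) : EReal)}

/-- Covering number: minimal number of `ε`-balls needed to cover `S`. -/
def coverNum {X : Type*} [PseudoEMetricSpace X] (S : Set X) (ε : ℝ≥0∞) : ℝ≥0∞ :=
  sInf {N : ℝ≥0∞ | ∃ F : Finset X, (S ⊆ ⋃ x ∈ F, EMetric.ball x ε) ∧ N = F.card}

/-- Upper box (Minkowski) dimension: the infimum of exponents `r ≥ 0` such that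
the covering number is `O(ε^{-r})` as `ε → 0⁺`. -/
def upperBoxDim {X : Type*} [PseudoEMetricSpace X] (S : Set X) : ℝ≥0∞ :=
  sInf {s : ℝ≥0∞ | ∃ r : ℝ, 0 ≤ r ∧ s = ENNReal.ofReal r ∧
    ∃ C : ℝ≥0∞, C ≠ ⊤ ∧ ∀ᶠ ε in 𝓝[>] (0 : ℝ≥0∞), coverNum S ε ≤ C * ε⁻¹ ^ r}

/-- Packing dimension, via the modified upper box dimension. -/
def packingDim {X : Type*} [PseudoEMetricSpace X] (S : Set X) : ℝ≥0∞ :=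
  ⨅ (U : ℕ → Set X) (_ : S ⊆ ⋃ i, U i), ⨆ i, upperBoxDim (U i)

/-!
Write `L(q) = |q · ξ*|`. Along the alternating tail take `q_{j+1}, q_{j+3} ∈ H₂` and
`q_{j+2} ∈ H₁` (`Hlat 2 1` and `Hlat 2 0`; the paper's `ξ₁` is `ξ 0`), and put
`a = ‖q̂_{j+2}‖`, `b = ‖q̂_{j+3}‖`. Dirichlet's theorem gives `L(q_{j+1}) ≤ (a - 1)⁻²` and
`L(q_{j+2}) ≤ (b - 1)⁻²`, while `q_{j+1}` and `q_{j+3}` are independent points of the plane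
lattice `H₂`, so their determinant gives `1 ≤ 2 b L(q_{j+1})`. Hence `b ≫ a²`, and
`q_{j+2} = ±(a, 0, p)` yields `|ξ₁ - p / a| ≪ a⁻⁵`: the first coordinate of every point of `Θ²`
is approximable to order `5`. Above a unit square this set is covered, for each `q`, by about
`3 q · q⁵` squares of side `≍ q⁻⁵` (one column per fraction `p / q`), and
`∑ q⁶ q⁻⁵ᵈ < ∞` for `d > 7/5`; the Hausdorff–Cantelli lemma then gives `μH[d] Θ² = 0`.
-/

open MeasureTheory
open scoped NNReal

section BestApproximation

variable {m : ℕ}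

@[simp]
lemma hat_neg (q : Fin (m + 1) → ℤ) : hat (-q) = -hat q := rfl

lemma linForm_eq_abs_sum_add (ξ : Fin m → ℝ) (q : Fin (m + 1) → ℤ) :
    linForm ξ q = |∑ i, (hat q i : ℝ) * ξ i + q (Fin.last m)| := by
  simp [linForm, Fin.sum_univ_castSucc, star, hat]

@[simp]
lemma linForm_neg (ξ : Fin m → ℝ) (q : Fin (m + 1) → ℤ) : linForm ξ (-q) = linForm ξ q := by
  simp only [linForm, Pi.neg_apply, Int.cast_neg, neg_mul, Finset.sum_neg_distrib, abs_neg]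

lemma abs_le_norm_hat (q : Fin (m + 1) → ℤ) (i : Fin m) : |(hat q i : ℝ)| ≤ ‖hat q‖ := by
  simpa [Int.norm_eq_abs] using norm_le_pi_norm (hat q) i

lemma finite_setOf_norm_hat_le_linForm_le (ξ : Fin m → ℝ) (N C : ℝ) :
    {b : Fin (m + 1) → ℤ | ‖hat b‖ ≤ N ∧ linForm ξ b ≤ C}.Finite := by
  set R := max N (C + N * ∑ i, |ξ i|)
  refine (isCompact_closedBall (0 : Fin (m + 1) → ℤ) R).finite_of_discrete.subset ?_
  rintro b ⟨hN, hC⟩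
  have hN₀ : 0 ≤ N := (norm_nonneg _).trans hN
  rw [mem_closedBall_zero_iff, pi_norm_le_iff_of_nonneg (hN₀.trans (le_max_left _ _))]
  refine Fin.lastCases ?_ (fun i => ?_)
  · set S := ∑ i, (hat b i : ℝ) * ξ i
    have hS : |S| ≤ N * ∑ i, |ξ i| := by
      rw [Finset.mul_sum]
      refine (Finset.abs_sum_le_sum_abs _ _).trans (Finset.sum_le_sum fun i _ => ?_)
      rw [abs_mul]
      exact mul_le_mul_of_nonneg_right ((abs_le_norm_hat b i).trans hN) (abs_nonneg _)
    rw [linForm_eq_abs_sum_add] at hC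
    calc ‖b (Fin.last m)‖ = |(S + b (Fin.last m)) - S| := by
          rw [Int.norm_eq_abs, add_sub_cancel_left]
      _ ≤ |S + b (Fin.last m)| + |S| := abs_sub _ _
      _ ≤ R := (add_le_add hC hS).trans (le_max_right _ _)
  · rw [Int.norm_eq_abs]
    exact ((abs_le_norm_hat b i).trans hN).trans (le_max_left _ _)

lemma exists_isBestApprox_le {ξ : Fin m → ℝ} {v : Fin (m + 1) → ℤ} (hv : hat v ≠ 0) :
    ∃ w, IsBestApprox ξ w ∧ ‖hat w‖ ≤ ‖hat v‖ ∧ linForm ξ w ≤ linForm ξ v := by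
  set T := {b : Fin (m + 1) → ℤ | hat b ≠ 0 ∧ ‖hat b‖ ≤ ‖hat v‖ ∧ linForm ξ b ≤ linForm ξ v}
  have hT : T.Finite :=
    (finite_setOf_norm_hat_le_linForm_le ξ _ _).subset fun b hb => hb.2
  obtain ⟨w, ⟨hw, hwv, hlin⟩, hmin⟩ :=
    T.exists_min_image (linForm ξ) hT ⟨v, hv, le_rfl, le_rfl⟩
  refine ⟨w, ⟨hw, fun b hb hbw => ?_⟩, hwv, hlin⟩
  by_contra! hlt
  exact (hmin b ⟨hb, hbw.trans hwv, hlt.le.trans hlin⟩).not_gt hlt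

lemma exists_ne_abs_fract_sub_le (ξ : Fin m → ℝ) (hm : m ≠ 0) {N : ℕ} (hN : 1 ≤ N) :
    ∃ x y : Fin m → ℕ, x ≠ y ∧ (∀ i, x i ≤ N) ∧ (∀ i, y i ≤ N) ∧
      |Int.fract (∑ i, (x i : ℝ) * ξ i) - Int.fract (∑ i, (y i : ℝ) * ξ i)| ≤ 1 / (N : ℝ) ^ m := by
  classical
  set M : ℕ := (N + 1) ^ m - 1
  have hNM : N ^ m ≤ M := by
    have := Nat.pow_lt_pow_left (show N < N + 1 by omega) hm
    omega
  have hM : (0 : ℝ) < M := by exact_mod_cast (Nat.one_le_pow _ _ hN).trans hNM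
  set u : (Fin m → ℕ) → ℝ := fun x => ∑ i, (x i : ℝ) * ξ i
  set S := Fintype.piFinset fun _ : Fin m => Finset.range (N + 1)
  have hcard : (Finset.Ico (0 : ℤ) M).card < S.card := by
    simp only [Int.card_Ico, sub_zero, Int.toNat_natCast, S, Fintype.card_piFinset,
      Finset.card_range, Finset.prod_const, Finset.card_univ, Fintype.card_fin]
    have := Nat.one_le_pow m (N + 1) (Nat.succ_pos N)
    omega
  have hmaps : Set.MapsTo (fun x => ⌊Int.fract (u x) * M⌋) S (Finset.Ico (0 : ℤ) M) := by
    intro x _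
    simp only [Finset.coe_Ico, Set.mem_Ico, Int.floor_nonneg, Int.floor_lt, Int.cast_natCast]
    exact ⟨by positivity, by nlinarith [Int.fract_lt_one (u x)]⟩
  obtain ⟨x, hx, y, hy, hxy, hfloor⟩ := Finset.exists_ne_map_eq_of_card_lt_of_maps_to hcard hmaps
  have hle : ∀ z ∈ S, ∀ i, z i ≤ N := fun z hz i =>
    Nat.lt_succ_iff.1 (Finset.mem_range.1 (Fintype.mem_piFinset.1 hz i))
  refine ⟨x, y, hxy, hle x hx, hle y hy, ?_⟩
  have h := Int.abs_sub_lt_one_of_floor_eq_floor hfloor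
  rw [← sub_mul, abs_mul, abs_of_pos hM, ← lt_div_iff₀ hM] at h
  exact h.le.trans (one_div_le_one_div_of_le (by positivity) (by exact_mod_cast hNM))

/-- Dirichlet's theorem. -/
theorem exists_linForm_le_one_div_pow (ξ : Fin m → ℝ) (hm : m ≠ 0) {N : ℕ} (hN : 1 ≤ N) :
    ∃ v : Fin (m + 1) → ℤ, hat v ≠ 0 ∧ ‖hat v‖ ≤ N ∧ linForm ξ v ≤ 1 / (N : ℝ) ^ m := by
  obtain ⟨x, y, hxy, hxN, hyN, hfract⟩ := exists_ne_abs_fract_sub_le ξ hm hN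
  refine ⟨Fin.snoc (fun i => (x i : ℤ) - y i)
    (⌊∑ i, (y i : ℝ) * ξ i⌋ - ⌊∑ i, (x i : ℝ) * ξ i⌋), ?_, ?_, ?_⟩
  · intro h
    refine hxy (funext fun i => ?_)
    have := congrFun h i
    simp only [hat, Fin.snoc_castSucc, Pi.zero_apply] at this
    omega
  · refine (pi_norm_le_iff_of_nonneg (Nat.cast_nonneg _)).2 fun i => ?_
    simp only [hat, Fin.snoc_castSucc, Int.norm_eq_abs]
    have hxy : |(x i : ℤ) - y i| ≤ N := abs_le.2 ⟨by linarith [hyN i], by linarith [hxN i]⟩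
    exact_mod_cast hxy
  · convert hfract using 1
    rw [linForm_eq_abs_sum_add]
    simp only [hat, Fin.snoc_castSucc, Fin.snoc_last, Int.fract]
    push_cast
    simp only [sub_mul, Finset.sum_sub_distrib]
    congr 1
    ring

lemma exists_natCast_eq_norm {ι : Type*} [Fintype ι] (w : ι → ℤ) : ∃ n : ℕ, ‖w‖ = n := by
  suffices ∃ n : ℕ, ‖w‖₊ = n from this.imp fun n h => congrArg NNReal.toReal h
  rw [Pi.nnnorm_def]
  refine Finset.sup_induction (p := fun x : ℝ≥0 => ∃ n : ℕ, x = n) ⟨0, by simp⟩ ?_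
    fun i _ => ⟨(w i).natAbs, ?_⟩
  · rintro _ ⟨a, rfl⟩ _ ⟨b, rfl⟩
    exact ⟨max a b, by simp⟩
  · ext
    simp [Int.norm_eq_abs]

end BestApproximation

section CoordinatePlane

variable {m : ℕ} {l : Fin m} {q : Fin (m + 1) → ℤ}

lemma hat_eq_single_of_mem_Hlat (hq : q ∈ Hlat m l.castSucc) :
    hat q = Pi.single l (q l.castSucc) := by
  funext i
  by_cases hi : i = l
  · subst hi
    simp [hat]
  · rw [Pi.single_eq_of_ne hi]
    exact hq _ (fun h => hi (Fin.castSucc_injective _ h)) (Fin.castSucc_ne_last i)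

lemma norm_hat_of_mem_Hlat (hq : q ∈ Hlat m l.castSucc) : ‖hat q‖ = |(q l.castSucc : ℝ)| := by
  rw [hat_eq_single_of_mem_Hlat hq, Pi.norm_single, Int.norm_eq_abs]

lemma linForm_of_mem_Hlat (ξ : Fin m → ℝ) (hq : q ∈ Hlat m l.castSucc) :
    linForm ξ q = |q l.castSucc * ξ l + q (Fin.last m)| := by
  rw [linForm_eq_abs_sum_add, hat_eq_single_of_mem_Hlat hq,
    Fintype.sum_eq_single l fun i hi => by simp [Pi.single_eq_of_ne hi], Pi.single_eq_same]

end CoordinatePlane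

/-- The determinant `a e - c b` of the lattice points `(a, b)` and `(c, e)` is a nonzero integer. -/
lemma one_le_two_mul_abs_mul_abs_of_abs_add_lt {θ : ℝ} {a b c e : ℤ} (hc : c ≠ 0)
    (hac : |(a : ℝ)| ≤ |(c : ℝ)|) (hlt : |c * θ + e| < |a * θ + b|) :
    1 ≤ 2 * |(c : ℝ)| * |a * θ + b| := by
  have hD : ((a * e - c * b : ℤ) : ℝ) = a * (c * θ + e) - c * (a * θ + b) := by push_cast; ring
  have hc' : 0 < |(c : ℝ)| := abs_pos.2 (Int.cast_ne_zero.2 hc)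
  have hle : |(a : ℝ)| * |c * θ + e| < |(c : ℝ)| * |a * θ + b| :=
    (mul_le_mul_of_nonneg_right hac (abs_nonneg _)).trans_lt (mul_lt_mul_of_pos_left hlt hc')
  have hD₀ : a * e - c * b ≠ 0 := by
    intro h
    rw [h, Int.cast_zero, eq_comm, sub_eq_zero] at hD
    rw [← abs_mul, ← abs_mul, hD] at hle
    exact hle.false
  calc (1 : ℝ) ≤ |((a * e - c * b : ℤ) : ℝ)| := by exact_mod_cast Int.one_le_abs hD₀
    _ ≤ |(a : ℝ)| * |c * θ + e| + |(c : ℝ)| * |a * θ + b| := by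
      rw [hD, ← abs_mul, ← abs_mul]
      exact abs_sub _ _
    _ ≤ 2 * |(c : ℝ)| * |a * θ + b| := by linarith

namespace IsBestApproxSeq

variable {m : ℕ} {ξ : Fin m → ℝ} {Q : ℕ → Fin (m + 1) → ℤ}

lemma linForm_le (hQ : IsBestApproxSeq ξ Q) {j : ℕ} {v : Fin (m + 1) → ℤ} (hv : hat v ≠ 0)
    (hvQ : ‖hat v‖ < ‖hat (Q (j + 1))‖) : linForm ξ (Q j) ≤ linForm ξ v := by
  obtain ⟨w, hw, hwv, hlin⟩ := exists_isBestApprox_le (ξ := ξ) hv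
  obtain ⟨i, hi⟩ := hQ.2.2.2 w hw
  have hwQ : ‖hat w‖ = ‖hat (Q i)‖ ∧ linForm ξ w = linForm ξ (Q i) := by
    rcases hi with rfl | rfl <;> simp
  have hij : i ≤ j := by
    by_contra! hji
    have := (strictMono_nat_of_lt_succ hQ.2.1).monotone hji
    linarith [hwQ.1]
  calc linForm ξ (Q j) ≤ linForm ξ (Q i) :=
        (strictAnti_nat_of_succ_lt (f := fun k => linForm ξ (Q k)) hQ.2.2.1).antitone hij
    _ = linForm ξ w := hwQ.2.symm
    _ ≤ linForm ξ v := hlin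

lemma natCast_le_norm_hat (hQ : IsBestApproxSeq ξ Q) (j : ℕ) : (j : ℝ) ≤ ‖hat (Q j)‖ := by
  induction j with
  | zero => simp
  | succ j ih =>
    obtain ⟨a, ha⟩ := exists_natCast_eq_norm (hat (Q j))
    obtain ⟨b, hb⟩ := exists_natCast_eq_norm (hat (Q (j + 1)))
    have hab : a < b := by exact_mod_cast ha ▸ hb ▸ hQ.2.1 j
    have hja : j ≤ a := by exact_mod_cast ha ▸ ih
    rw [hb]
    exact_mod_cast (by omega : j + 1 ≤ b)

lemma linForm_le_one_div_norm_hat_sub_one_pow (hQ : IsBestApproxSeq ξ Q) (hm : m ≠ 0) {j : ℕ}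
    (hj : 2 ≤ ‖hat (Q (j + 1))‖) : linForm ξ (Q j) ≤ 1 / (‖hat (Q (j + 1))‖ - 1) ^ m := by
  obtain ⟨b, hb⟩ := exists_natCast_eq_norm (hat (Q (j + 1)))
  rw [hb] at hj ⊢
  have hb₂ : 2 ≤ b := by exact_mod_cast hj
  obtain ⟨v, hv, hvN, hlin⟩ := exists_linForm_le_one_div_pow ξ hm (N := b - 1) (by omega)
  rw [Nat.cast_sub (by omega), Nat.cast_one] at hvN hlin
  exact (hQ.linForm_le hv (by rw [hb]; linarith)).trans hlin

lemma one_le_two_mul_norm_hat_mul_linForm (hQ : IsBestApproxSeq ξ Q) {i k : ℕ} (hik : i < k)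
    {l : Fin m} (hi : Q i ∈ Hlat m l.castSucc) (hk : Q k ∈ Hlat m l.castSucc) :
    1 ≤ 2 * ‖hat (Q k)‖ * linForm ξ (Q i) := by
  have hnorm := (strictMono_nat_of_lt_succ hQ.2.1).monotone hik.le
  have hlin := strictAnti_nat_of_succ_lt (f := fun k => linForm ξ (Q k)) hQ.2.2.1 hik
  simp only [norm_hat_of_mem_Hlat hi, norm_hat_of_mem_Hlat hk] at hnorm
  simp only [linForm_of_mem_Hlat ξ hi, linForm_of_mem_Hlat ξ hk] at hlin
  rw [norm_hat_of_mem_Hlat hk, linForm_of_mem_Hlat ξ hi]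
  refine one_le_two_mul_abs_mul_abs_of_abs_add_lt (fun hc => (hQ.1 k).1 ?_) hnorm hlin
  rw [hat_eq_single_of_mem_Hlat hk, hc, Pi.single_zero]

end IsBestApproxSeq

def wellApprox (c τ : ℝ) : Set ℝ :=
  {x | ∃ᶠ q : ℕ in atTop, ∃ p : ℤ, |x - p / q| ≤ c / (q : ℝ) ^ τ}

lemma one_div_sub_one_sq_le {a b : ℝ} (ha : 3 ≤ a) (hab : (a - 1) ^ 2 ≤ 2 * b) :
    1 / (b - 1) ^ 2 ≤ 256 / a ^ 4 := by
  have h : a ^ 2 / 16 ≤ b - 1 := by nlinarith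
  have h₀ : 0 < a ^ 2 / 16 := by positivity
  calc 1 / (b - 1) ^ 2 ≤ 1 / (a ^ 2 / 16) ^ 2 :=
        one_div_le_one_div_of_le (by positivity) (pow_le_pow_left₀ h₀.le h 2)
    _ = 256 / a ^ 4 := by ring

lemma exists_abs_sub_div_natAbs_le {x c : ℝ} {k l : ℤ} {n : ℕ} (hk : k ≠ 0)
    (h : |k * x + l| ≤ c / |(k : ℝ)| ^ n) :
    ∃ p : ℤ, |x - p / k.natAbs| ≤ c / (k.natAbs : ℝ) ^ (n + 1) := by
  have hq : (0 : ℝ) < k.natAbs := by exact_mod_cast Int.natAbs_pos.2 hk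
  have habs : |(k : ℝ)| = k.natAbs := by rw [Nat.cast_natAbs, Int.cast_abs]
  rw [habs] at h
  have key : ∀ p : ℤ, |x - p / k.natAbs| = |k.natAbs * x - p| / k.natAbs := fun p => by
    rw [← abs_of_pos hq, ← abs_div, abs_of_pos hq]
    congr 1
    field_simp
  rcases Int.natAbs_eq k with hk' | hk'
  · refine ⟨-l, ?_⟩
    rw [key, pow_succ, ← div_div, div_le_div_iff_of_pos_right hq, Int.cast_neg, sub_neg_eq_add]
    rwa [show (k : ℝ) = k.natAbs from congrArg (Int.cast (R := ℝ)) hk'] at h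
  · refine ⟨l, ?_⟩
    rw [key, pow_succ, ← div_div, div_le_div_iff_of_pos_right hq, abs_sub_comm]
    rwa [show (k : ℝ) = -k.natAbs by rw [congrArg (Int.cast (R := ℝ)) hk', Int.cast_neg,
      Int.cast_natCast], neg_mul, neg_add_eq_sub] at h

lemma IsBestApproxSeq.linForm_le_div_norm_hat_pow_four {ξ : Fin 2 → ℝ}
    {Q : ℕ → Fin 3 → ℤ} (hQ : IsBestApproxSeq ξ Q) {j : ℕ} (h₁ : Q (j + 1) ∈ Hlat 2 1)
    (h₃ : Q (j + 3) ∈ Hlat 2 1) (ha : 3 ≤ ‖hat (Q (j + 2))‖) :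
    linForm ξ (Q (j + 2)) ≤ 256 / ‖hat (Q (j + 2))‖ ^ 4 := by
  set a := ‖hat (Q (j + 2))‖
  set b := ‖hat (Q (j + 3))‖
  have gap₁ : linForm ξ (Q (j + 1)) ≤ 1 / (a - 1) ^ 2 :=
    hQ.linForm_le_one_div_norm_hat_sub_one_pow two_ne_zero (by linarith)
  have gap₂ : linForm ξ (Q (j + 2)) ≤ 1 / (b - 1) ^ 2 :=
    hQ.linForm_le_one_div_norm_hat_sub_one_pow two_ne_zero (by linarith [hQ.2.1 (j + 2)])
  have hdet : 1 ≤ 2 * b * linForm ξ (Q (j + 1)) :=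
    hQ.one_le_two_mul_norm_hat_mul_linForm (l := 1) (by omega) h₁ h₃
  have ha₁ : 0 < (a - 1) ^ 2 := by nlinarith
  rw [le_div_iff₀ ha₁, mul_comm] at gap₁
  have hab : (a - 1) ^ 2 ≤ 2 * b :=
    calc (a - 1) ^ 2 ≤ (a - 1) ^ 2 * (2 * b * linForm ξ (Q (j + 1))) :=
          le_mul_of_one_le_right ha₁.le hdet
      _ = 2 * b * ((a - 1) ^ 2 * linForm ξ (Q (j + 1))) := by ring
      _ ≤ 2 * b := mul_le_of_le_one_right (by positivity) gap₁
  exact gap₂.trans (one_div_sub_one_sq_le ha hab)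

theorem Theta_two_subset_setOf_wellApprox : Theta 2 ⊆ {ξ | ξ 0 ∈ wellApprox 256 5} := by
  rintro ξ ⟨-, Q, hQ, j₀, hmem, halt, -⟩
  have next₀ : ∀ j ≥ j₀, Q j ∈ Hlat 2 0 → Q (j + 1) ∈ Hlat 2 1 := fun j hj h =>
    (hmem (j + 1) (by omega)).resolve_left fun h' => (halt j hj).1 ⟨h, h'⟩
  have next₁ : ∀ j ≥ j₀, Q j ∈ Hlat 2 1 → Q (j + 1) ∈ Hlat 2 0 := fun j hj h =>
    (hmem (j + 1) (by omega)).resolve_right fun h' => (halt j hj).2 ⟨h, h'⟩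
  refine frequently_atTop.2 fun K => ?_
  obtain ⟨j, hj, h₁⟩ : ∃ j ≥ j₀ + K + 1, Q (j + 1) ∈ Hlat 2 1 := by
    rcases hmem (j₀ + K + 2) (by omega) with h | h
    · exact ⟨j₀ + K + 2, by omega, next₀ _ (by omega) h⟩
    · exact ⟨j₀ + K + 1, le_rfl, h⟩
  have h₂ : Q (j + 2) ∈ Hlat 2 0 := next₁ (j + 1) (by omega) h₁
  have h₃ : Q (j + 3) ∈ Hlat 2 1 := next₀ (j + 2) (by omega) h₂
  have ha : (K + 3 : ℝ) ≤ ‖hat (Q (j + 2))‖ :=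
    le_trans (by exact_mod_cast (by omega : K + 3 ≤ j + 2)) (hQ.natCast_le_norm_hat (j + 2))
  have hL := hQ.linForm_le_div_norm_hat_pow_four h₁ h₃ (by linarith)
  rw [linForm_of_mem_Hlat (l := 0) ξ h₂, norm_hat_of_mem_Hlat (l := 0) h₂] at hL
  rw [norm_hat_of_mem_Hlat (l := 0) h₂] at ha
  have hk : Q (j + 2) (Fin.castSucc 0) ≠ 0 := fun h => by
    rw [h, Int.cast_zero, abs_zero] at ha
    linarith
  obtain ⟨p, hp⟩ := exists_abs_sub_div_natAbs_le hk hL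
  refine ⟨(Q (j + 2) (Fin.castSucc 0)).natAbs, ?_, p, ?_⟩
  · rw [← Nat.cast_le (α := ℝ), Nat.cast_natAbs, Int.cast_abs]
    linarith
  · rwa [show (5 : ℝ) = (4 + 1 : ℕ) by norm_num, Real.rpow_natCast]

section HausdorffCantelli

variable {X : Type*} [EMetricSpace X] [MeasurableSpace X] [BorelSpace X]

theorem hausdorffMeasure_setOf_frequently_mem_eq_zero {ι : Type*} {d : ℝ} (hd : 0 < d)
    (S : ℕ → Finset ι) (E : ℕ → ι → Set X)
    (hE : ∑' n, ∑ i ∈ S n, Metric.ediam (E n i) ^ d ≠ ∞) :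
    μH[d] {x | ∃ᶠ n in atTop, ∃ i ∈ S n, x ∈ E n i} = 0 := by
  set s : ℕ → ℝ≥0∞ := fun n => ∑ i ∈ S n, Metric.ediam (E n i) ^ d
  set tail : ℕ → ℝ≥0∞ := fun K => ∑' n, s (n + K)
  have htail : Tendsto tail atTop (𝓝 0) := ENNReal.tendsto_sum_nat_add s hE
  refine le_antisymm ((Measure.hausdorffMeasure_le_liminf_tsum (l := atTop) d _
    (fun K => tail K ^ d⁻¹) ?_ (fun K (x : Σ n, S (n + K)) => E (x.1 + K) x.2) ?_ ?_).trans ?_)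
    zero_le
  · have h := ((ENNReal.continuous_rpow_const (y := d⁻¹)).tendsto 0).comp htail
    rwa [ENNReal.zero_rpow_of_pos (inv_pos.2 hd)] at h
  · refine Eventually.of_forall fun K x => (ENNReal.le_rpow_inv_iff hd).2 ?_
    calc Metric.ediam (E (x.1 + K) x.2) ^ d ≤ s (x.1 + K) :=
          Finset.single_le_sum (f := fun i => Metric.ediam (E (x.1 + K) i) ^ d)
            (fun i _ => zero_le) x.2.2
      _ ≤ tail K := ENNReal.le_tsum x.1
  · refine Eventually.of_forall fun K x hx => ?_
    obtain ⟨n, hn, i, hi, hxi⟩ := frequently_atTop.1 hx K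
    obtain ⟨n, rfl⟩ := Nat.exists_eq_add_of_le' hn
    exact mem_iUnion.2 ⟨⟨n, i, hi⟩, hxi⟩
  · simp only [ENNReal.tsum_sigma']
    refine (congrArg (liminf · atTop) (funext fun K => ?_)).trans_le htail.liminf_eq.le
    exact tsum_congr fun n => Finset.tsum_subtype _ fun i => Metric.ediam (E (n + K) i) ^ d

end HausdorffCantelli

section WellApproximable

variable {c τ d : ℝ}

/-- The square of side `2 c / q ^ τ` centred at `(p / q, m₂ + i c / q ^ τ)`, for `x = (p, i)`. -/
def approxSquare (c τ : ℝ) (m₂ : ℤ) (q : ℕ) (x : ℤ × ℕ) : Set (Fin 2 → ℝ) :=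
  Metric.closedBall ![x.1 / q, m₂ + x.2 * (c / (q : ℝ) ^ τ)] (c / (q : ℝ) ^ τ)

def approxSquareIndex (c τ : ℝ) (m₁ : ℤ) (q : ℕ) : Finset (ℤ × ℕ) :=
  Finset.Icc (q * (m₁ - 1)) (q * (m₁ + 2)) ×ˢ Finset.range (⌊(q : ℝ) ^ τ / c⌋₊ + 1)

lemma card_approxSquareIndex (c τ : ℝ) (m₁ : ℤ) (q : ℕ) :
    (approxSquareIndex c τ m₁ q).card = (3 * q + 1) * (⌊(q : ℝ) ^ τ / c⌋₊ + 1) := by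
  have h : (q : ℤ) * (m₁ + 2) + 1 - q * (m₁ - 1) = ((3 * q + 1 : ℕ) : ℤ) := by push_cast; ring
  rw [approxSquareIndex, Finset.card_product, Int.card_Icc, h, Int.toNat_natCast,
    Finset.card_range]

lemma frequently_mem_approxSquare (hc : 0 < c) (hτ : 0 < τ) {ξ : Fin 2 → ℝ}
    (hξ : ξ 0 ∈ wellApprox c τ) {m₁ m₂ : ℤ} (h₀ : ξ 0 ∈ Icc (m₁ : ℝ) (m₁ + 1))
    (h₁ : ξ 1 ∈ Icc (m₂ : ℝ) (m₂ + 1)) :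
    ∃ᶠ q in atTop, ∃ x ∈ approxSquareIndex c τ m₁ q, ξ ∈ approxSquare c τ m₂ q x := by
  have hsmall : ∀ᶠ q : ℕ in atTop, 1 ≤ q ∧ c ≤ (q : ℝ) ^ τ :=
    (eventually_ge_atTop 1).and
      (((tendsto_rpow_atTop hτ).comp tendsto_natCast_atTop_atTop).eventually_ge_atTop c)
  refine (hξ.and_eventually hsmall).mono ?_
  rintro q ⟨⟨p, hp⟩, hq₁, hcq⟩
  have hq : (0 : ℝ) < q := by exact_mod_cast hq₁
  set ρ := c / (q : ℝ) ^ τ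
  have hρ : 0 < ρ := by positivity
  have hρ₁ : ρ ≤ 1 := div_le_one_of_le₀ hcq (by positivity)
  obtain ⟨hp₁, hp₂⟩ := abs_le.1 hp
  set y := ξ 1 - m₂
  have hy : 0 ≤ y ∧ y ≤ 1 := by constructor <;> linarith [h₁.1, h₁.2]
  set i := ⌊y / ρ⌋₊
  refine ⟨(p, i), Finset.mem_product.2 ⟨Finset.mem_Icc.2 ⟨?_, ?_⟩, Finset.mem_range.2 ?_⟩, ?_⟩
  · have : (m₁ - 1 : ℝ) ≤ p / q := by linarith [h₀.1]
    exact_mod_cast (le_div_iff₀' hq).1 this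
  · have : (p / q : ℝ) ≤ m₁ + 2 := by linarith [h₀.2]
    exact_mod_cast (div_le_iff₀' hq).1 this
  · refine Nat.lt_succ_of_le (Nat.floor_le_floor ?_)
    exact (div_le_div_of_nonneg_right hy.2 hρ.le).trans_eq (one_div_div _ _)
  · have hi₁ : i * ρ ≤ y := (le_div_iff₀ hρ).1 (Nat.floor_le (div_nonneg hy.1 hρ.le))
    have hi₂ : y < (i + 1) * ρ := (div_lt_iff₀ hρ).1 (Nat.lt_floor_add_one _)
    rw [approxSquare, Metric.mem_closedBall, dist_pi_le_iff hρ.le]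
    intro k
    fin_cases k
    · simpa [Real.dist_eq] using hp
    · simp only [Real.dist_eq, abs_le]
      constructor <;> simp <;> linarith

lemma approxSquare_count_mul_side_rpow_le (hc : 0 < c) (hτ : 0 < τ) (hd : 0 < d) (q : ℕ) :
    (3 * q + 1) * (⌊(q : ℝ) ^ τ / c⌋₊ + 1) * (2 * (c / (q : ℝ) ^ τ)) ^ d ≤
      4 * (1 / c + 1) * (2 * c) ^ d * (q : ℝ) ^ (1 + τ - τ * d) := by
  rcases Nat.eq_zero_or_pos q with rfl | hq
  · simp [Real.zero_rpow hτ.ne', Real.zero_rpow hd.ne']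
    positivity
  have hq₁ : (1 : ℝ) ≤ q := by exact_mod_cast hq
  have hq₀ : (0 : ℝ) < q := by linarith
  have hqτ : 1 ≤ (q : ℝ) ^ τ := Real.one_le_rpow hq₁ hτ.le
  have h₁ : (⌊(q : ℝ) ^ τ / c⌋₊ + 1 : ℝ) ≤ (1 / c + 1) * q ^ τ := by
    have := Nat.floor_le (div_nonneg (zero_le_one.trans hqτ) hc.le)
    rw [add_mul, one_div_mul_eq_div, one_mul]
    linarith
  have h₂ : (2 * (c / (q : ℝ) ^ τ)) ^ d = (2 * c) ^ d / q ^ (τ * d) := by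
    rw [mul_div_assoc', Real.div_rpow (by positivity) (by positivity), ← Real.rpow_mul hq₀.le]
  have h₃ : (q : ℝ) ^ (1 + τ - τ * d) = q * q ^ τ / q ^ (τ * d) := by
    rw [Real.rpow_sub hq₀, Real.rpow_add hq₀, Real.rpow_one]
  rw [h₂, h₃]
  calc _ ≤ (4 * q) * ((1 / c + 1) * q ^ τ) * ((2 * c) ^ d / q ^ (τ * d)) := by
        gcongr
        linarith
    _ = _ := by ring

lemma sum_ediam_approxSquare_le (hc : 0 < c) (hτ : 0 < τ) (hd : 0 < d) (m₁ m₂ : ℤ) (q : ℕ) :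
    ∑ x ∈ approxSquareIndex c τ m₁ q, Metric.ediam (approxSquare c τ m₂ q x) ^ d ≤
      ENNReal.ofReal (4 * (1 / c + 1) * (2 * c) ^ d * (q : ℝ) ^ (1 + τ - τ * d)) := by
  refine le_trans ?_ (ENNReal.ofReal_le_ofReal (approxSquare_count_mul_side_rpow_le hc hτ hd q))
  have hρ : 0 ≤ c / (q : ℝ) ^ τ := by positivity
  have hdiam : ∀ x, Metric.ediam (approxSquare c τ m₂ q x) ^ d ≤
      ENNReal.ofReal ((2 * (c / (q : ℝ) ^ τ)) ^ d) := fun x => by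
    rw [← ENNReal.ofReal_rpow_of_nonneg (by positivity) hd.le]
    gcongr
    rw [approxSquare, ← Metric.closedEBall_ofReal hρ, ENNReal.ofReal_mul zero_le_two,
      ENNReal.ofReal_ofNat]
    exact Metric.ediam_closedEBall_le
  refine (Finset.sum_le_card_nsmul _ _ _ fun x _ => hdiam x).trans_eq ?_
  rw [card_approxSquareIndex, nsmul_eq_mul, ← ENNReal.ofReal_natCast,
    ← ENNReal.ofReal_mul (Nat.cast_nonneg _)]
  push_cast
  rfl

theorem hausdorffMeasure_setOf_wellApprox_eq_zero (hc : 0 < c) (hτ : 0 < τ)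
    (hd : τ + 2 < τ * d) : μH[d] {ξ : Fin 2 → ℝ | ξ 0 ∈ wellApprox c τ} = 0 := by
  have hd₀ : 0 < d := by nlinarith
  have hsum : ∀ m₁ m₂ : ℤ, ∑' q, ∑ x ∈ approxSquareIndex c τ m₁ q,
      Metric.ediam (approxSquare c τ m₂ q x) ^ d ≠ ∞ := fun m₁ m₂ => by
    have hf : Summable fun q : ℕ => 4 * (1 / c + 1) * (2 * c) ^ d * (q : ℝ) ^ (1 + τ - τ * d) :=
      (Real.summable_nat_rpow.2 (by linarith)).mul_left _
    have hle := (ENNReal.tsum_le_tsum fun q => sum_ediam_approxSquare_le hc hτ hd₀ m₁ m₂ q).trans_eq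
      (ENNReal.ofReal_tsum_of_nonneg (fun q => by positivity) hf).symm
    exact ne_top_of_le_ne_top ENNReal.ofReal_ne_top hle
  refine measure_mono_null (fun ξ hξ => ?_) (measure_iUnion_null fun m : ℤ × ℤ =>
    hausdorffMeasure_setOf_frequently_mem_eq_zero hd₀ _ _ (hsum m.1 m.2))
  exact mem_iUnion.2 ⟨(⌊ξ 0⌋, ⌊ξ 1⌋), frequently_mem_approxSquare hc hτ hξ
    ⟨Int.floor_le _, (Int.lt_floor_add_one _).le⟩ ⟨Int.floor_le _, (Int.lt_floor_add_one _).le⟩⟩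

end WellApproximable

/-- `dim_H(Θ²) ≤ 7/5`. -/
theorem dimH_Theta_two_upper : dimH (Theta 2) ≤ (7 / 5 : ℝ≥0∞) := by
  refine dimH_le fun d hd => le_of_not_gt fun hlt => ?_
  have h75 : (7 / 5 : ℝ) < d := by
    rw [show (7 / 5 : ℝ≥0∞) = ((7 / 5 : ℝ≥0) : ℝ≥0∞) by norm_num, ENNReal.coe_lt_coe] at hlt
    exact_mod_cast hlt
  have hnull : μH[d] (Theta 2) = 0 := measure_mono_null Theta_two_subset_setOf_wellApprox
    (hausdorffMeasure_setOf_wellApprox_eq_zero (by norm_num) (by norm_num) (by linarith))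
  exact ENNReal.zero_ne_top (hnull ▸ hd)

end BestApprox
end
end

section
/- Let n ≥ 3 be an integer, let ξ₃,…,ξₙ ∈ ℝ satisfy ω(ξ₃,…,ξₙ) = n − 2, and let ε > 0. Then there exists Q₀ = Q₀(ε) such that for every Q ≥ Q₀ there exist n − 1 linearly independent integer vectors u₁,…,u_{n−1} ∈ ℤ^{n−1} with max_{1≤i≤n−1} ‖û_i‖ ≤ Q and |u_i·(ξ₃,…,ξₙ,1)| ≤ Q^{−(n−2)+ε} for all 1 ≤ i ≤ n − 1. -/
open Filter Set Topology
open scoped ENNReal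

noncomputable section

namespace BestApprox

/-!
For a scale `S` let `Λ_S` be the unimodular lattice of vectors `(S⁻¹ ĉ, Sᵐ (c · ξ*))`,
`c ∈ ℤᵐ⁺¹`. Since `ω(ξ) = m`, for every `δ > 0` and every large `S` no nonzero vector of `Λ_S` is
shorter than `S^{-δ}`. A weak form of Minkowski's second theorem gives `m + 1` independent vectors
of `Λ_S` whose norms have product at most `2^{(m+1)²}`; with the lower bound, each of them has norm
at most `2^{(m+1)²} S^{mδ}`, i.e. `‖ĉ‖ ≪ S^{1+mδ}` and `|c · ξ*| ≪ S^{mδ-m}`. Taking `S = Q^τ` with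
`τ` slightly below `1` gives the claim.

Minkowski's bound is proved by induction on the dimension. A shortest lattice vector `v` is
primitive, so it is the first vector of a lattice basis. Projecting along `v` onto a coordinate
hyperplane `x_j = 0` with `|v_j| = ‖v‖` divides the covolume by `‖v‖`, and, by rounding the
coefficient of `v`, every vector of the projected lattice lifts to a lattice vector at most
`‖v‖ / 2` longer, hence at most twice as long since `v` is shortest.
-/

open Matrix

@[simp]
lemma realVec_apply {k : ℕ} (q : Fin k → ℤ) (i : Fin k) : realVec q i = q i := rfl

@[simp]
lemma realVec_eq_zero_iff {k : ℕ} {q : Fin k → ℤ} : realVec q = 0 ↔ q = 0 := by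
  simp [funext_iff, realVec]

lemma realVec_smul {k : ℕ} (g : ℤ) (q : Fin k → ℤ) : realVec (g • q) = (g : ℝ) • realVec q := by
  ext i; simp

lemma realVec_mulVec {k l : ℕ} (M : Matrix (Fin k) (Fin l) ℤ) (q : Fin l → ℤ) :
    realVec (M *ᵥ q) = M.map (Int.cast : ℤ → ℝ) *ᵥ realVec q :=
  funext fun i => (Int.castRingHom ℝ).map_mulVec M q i

@[simp]
lemma norm_realVec {k : ℕ} (q : Fin k → ℤ) : ‖realVec q‖ = ‖q‖ := by
  refine le_antisymm ((pi_norm_le_iff_of_nonneg (norm_nonneg _)).2 fun i => ?_)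
    ((pi_norm_le_iff_of_nonneg (norm_nonneg _)).2 fun i => ?_)
  · rw [realVec_apply, Int.norm_cast_real]; exact norm_le_pi_norm q i
  · rw [← Int.norm_cast_real, ← realVec_apply]; exact norm_le_pi_norm (realVec q) i

lemma realVec_funLeft_succ_cons {k : ℕ} (t : ℤ) (q : Fin k → ℤ) :
    LinearMap.funLeft ℝ ℝ Fin.succ (realVec (Fin.cons t q)) = realVec q := by
  ext i; simp [LinearMap.funLeft_apply]

lemma exists_abs_eq_norm {k : ℕ} (x : Fin (k + 1) → ℝ) : ∃ j, |x j| = ‖x‖ := by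
  obtain ⟨j, -, hj⟩ := Finset.univ.exists_max_image (fun i => |x i|) Finset.univ_nonempty
  refine ⟨j, le_antisymm (by simpa using norm_le_pi_norm x j) ?_⟩
  exact (pi_norm_le_iff_of_nonneg (abs_nonneg _)).2 fun i => by simpa using hj i (by simp)

lemma norm_comp_succAbove_of_eq_zero {k : ℕ} {w : Fin (k + 1) → ℝ} {j : Fin (k + 1)}
    (hw : w j = 0) : ‖w ∘ j.succAbove‖ = ‖w‖ := by
  refine le_antisymm ((pi_norm_le_iff_of_nonneg (norm_nonneg _)).2 fun a => norm_le_pi_norm w _)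
    ((pi_norm_le_iff_of_nonneg (norm_nonneg _)).2 fun i => ?_)
  rcases eq_or_ne i j with rfl | hi
  · simp [hw]
  · obtain ⟨a, rfl⟩ := Fin.exists_succAbove_eq hi
    exact norm_le_pi_norm (w ∘ j.succAbove) a

lemma linearIndependent_finCons_of_map_eq_zero {K M N : Type*} [DivisionRing K] [AddCommGroup M]
    [Module K M] [AddCommGroup N] [Module K N] {m : ℕ} {x : M}
    {v : Fin m → M} (f : M →ₗ[K] N) (hv : LinearIndependent K (f ∘ v)) (hx : x ≠ 0)
    (hfx : f x = 0) : LinearIndependent K (Fin.cons x v : Fin (m + 1) → M) := by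
  rw [Fintype.linearIndependent_iff] at hv ⊢
  intro g hg
  rw [Fin.sum_univ_succ] at hg
  have htail : ∀ i : Fin m, g i.succ = 0 := hv (fun i => g i.succ) <| by
    simpa [hfx] using congrArg f hg
  have h0 : g 0 • x = 0 := by simpa [htail] using hg
  exact fun i => Fin.cases ((smul_eq_zero.1 h0).resolve_right hx) htail i

lemma abs_det_map_intCast {k : ℕ} {M : Matrix (Fin k) (Fin k) ℤ} (hM : IsUnit M.det) :
    |(M.map (Int.cast : ℤ → ℝ)).det| = 1 := by
  rw [← Int.cast_det, ← Int.cast_abs, Int.isUnit_iff_abs_eq.1 hM, Int.cast_one]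

lemma mulVec_ne_zero_of_isUnit_det {k : ℕ} {M : Matrix (Fin k) (Fin k) ℤ} (hM : IsUnit M.det)
    {z : Fin k → ℤ} (hz : z ≠ 0) : M *ᵥ z ≠ 0 := fun h => hz <| by
  simpa [mulVec_mulVec, nonsing_inv_mul _ hM] using congrArg (M⁻¹ *ᵥ ·) h

section LinftyOpNorm

attribute [local instance] Matrix.linftyOpNormedAddCommGroup

lemma norm_le_mul_norm_mulVec {k : ℕ} (T : Matrix (Fin k) (Fin k) ℝ) (hT : T.det ≠ 0)
    (x : Fin k → ℝ) : ‖x‖ ≤ ‖T⁻¹‖ * ‖T *ᵥ x‖ := by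
  calc ‖x‖ = ‖T⁻¹ *ᵥ (T *ᵥ x)‖ := by
        rw [mulVec_mulVec, nonsing_inv_mul _ (isUnit_iff_ne_zero.2 hT), one_mulVec]
    _ ≤ ‖T⁻¹‖ * ‖T *ᵥ x‖ := linfty_opNorm_mulVec _ _

lemma norm_mulVec_realVec_pos {k : ℕ} (T : Matrix (Fin k) (Fin k) ℝ) (hT : T.det ≠ 0)
    {z : Fin k → ℤ} (hz : z ≠ 0) : 0 < ‖T *ᵥ realVec z‖ := by
  refine norm_pos_iff.2 fun h => hz ?_
  have := norm_le_mul_norm_mulVec T hT (realVec z)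
  rw [h, norm_zero, mul_zero, norm_realVec] at this
  exact norm_le_zero_iff.1 this

lemma exists_forall_norm_mulVec_le {k : ℕ} (T : Matrix (Fin (k + 1)) (Fin (k + 1)) ℝ)
    (hT : T.det ≠ 0) :
    ∃ z ≠ 0, ∀ z' : Fin (k + 1) → ℤ, z' ≠ 0 → ‖T *ᵥ realVec z‖ ≤ ‖T *ᵥ realVec z'‖ := by
  set f : (Fin (k + 1) → ℤ) → ℝ := fun z => ‖T *ᵥ realVec z‖
  have he : (Pi.single 0 1 : Fin (k + 1) → ℤ) ≠ 0 := by simp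
  have hfin : {z | z ≠ 0 ∧ f z ≤ f (Pi.single 0 1)}.Finite := by
    refine ((isCompact_closedBall 0 (‖T⁻¹‖ * f (Pi.single 0 1))).finite_of_discrete).subset ?_
    rintro z ⟨-, hz⟩
    rw [mem_closedBall_zero_iff, ← norm_realVec]
    exact (norm_le_mul_norm_mulVec T hT _).trans (by gcongr)
  obtain ⟨z, ⟨hz, hzle⟩, hmin⟩ := Set.exists_min_image _ f hfin ⟨_, he, le_rfl⟩
  refine ⟨z, hz, fun z' hz' => ?_⟩
  by_cases h : f z' ≤ f (Pi.single 0 1)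
  · exact hmin z' ⟨hz', h⟩
  · exact hzle.trans (le_of_not_ge h)

end LinftyOpNorm

lemma isUnit_of_eq_smul_of_forall_norm_mulVec_le {k : ℕ} {T : Matrix (Fin k) (Fin k) ℝ}
    (hT : T.det ≠ 0) {z : Fin k → ℤ} (hz : z ≠ 0)
    (hmin : ∀ z' : Fin k → ℤ, z' ≠ 0 → ‖T *ᵥ realVec z‖ ≤ ‖T *ᵥ realVec z'‖)
    {g : ℤ} {z' : Fin k → ℤ} (h : z = g • z') : IsUnit g := by
  have hz' : z' ≠ 0 := by rintro rfl; exact hz (by simpa using h)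
  have hg : g ≠ 0 := by rintro rfl; exact hz (by simpa using h)
  have hnorm : ‖T *ᵥ realVec z‖ = |(g : ℝ)| * ‖T *ᵥ realVec z'‖ := by
    rw [h, realVec_smul, mulVec_smul, norm_smul, Real.norm_eq_abs]
  have hle : |(g : ℝ)| ≤ 1 := by
    have := hmin z' hz'
    have := norm_mulVec_realVec_pos T hT hz'
    nlinarith
  rw [Int.isUnit_iff_abs_eq]
  have : |g| ≤ 1 := by exact_mod_cast hle
  have : 0 < |g| := abs_pos.2 hg
  omega

lemma exists_dotProduct_eq_one {k : ℕ} {z : Fin k → ℤ}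
    (hz : ∀ (g : ℤ) (z' : Fin k → ℤ), z = g • z' → IsUnit g) : ∃ u, u ⬝ᵥ z = 1 := by
  set I := Ideal.span (Set.range z)
  set g := Submodule.IsPrincipal.generator I
  have hdvd : ∀ i, g ∣ z i := fun i =>
    (Submodule.IsPrincipal.mem_iff_generator_dvd I).1 (Ideal.subset_span ⟨i, rfl⟩)
  have hI : I = ⊤ := Ideal.eq_top_of_isUnit_mem _ (Submodule.IsPrincipal.generator_mem I)
    (hz g (fun i => z i / g) (funext fun i => (Int.mul_ediv_cancel' (hdvd i)).symm))
  obtain ⟨u, hu⟩ :=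
    (Submodule.mem_span_range_iff_exists_fun ℤ).1 (hI ▸ Submodule.mem_top : (1 : ℤ) ∈ I)
  exact ⟨u, by simpa [dotProduct] using hu⟩

lemma exists_basis_zero_eq {k : ℕ} {z u : Fin (k + 1) → ℤ} (hu : u ⬝ᵥ z = 1) :
    ∃ b : Module.Basis (Fin (k + 1)) ℤ (Fin (k + 1) → ℤ), b 0 = z := by
  set W := dotProductEquiv ℤ (Fin (k + 1)) u
  have hWz : W z = 1 := hu
  set K := LinearMap.ker W
  obtain ⟨d, bK⟩ := K.basisOfPid (Pi.basisFun ℤ (Fin (k + 1)))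
  set v : Fin d → Fin (k + 1) → ℤ := fun i => bK i
  have hspan : Submodule.span ℤ (Set.range v) = K := by
    rw [show v = K.subtype ∘ bK from rfl, Set.range_comp, ← Submodule.map_span, bK.span_eq,
      Submodule.map_subtype_top]
  have hli : LinearIndependent ℤ (Fin.cons z v : Fin (d + 1) → Fin (k + 1) → ℤ) := by
    refine .finCons' z v (bK.linearIndependent.map' K.subtype K.ker_subtype) fun c y hy hcy => ?_
    rw [hspan] at hy
    have := congrArg W hcy
    rwa [map_add, map_smul, hWz, LinearMap.mem_ker.1 hy, smul_eq_mul, mul_one, add_zero,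
      map_zero] at this
  have hsp : ⊤ ≤ Submodule.span ℤ (Set.range (Fin.cons z v : Fin (d + 1) → Fin (k + 1) → ℤ)) := by
    intro x _
    have hK : x - W x • z ∈ Submodule.span ℤ (Set.range v) := by
      rw [hspan, LinearMap.mem_ker, map_sub, map_smul, hWz, smul_eq_mul, mul_one, sub_self]
    rw [Fin.range_cons, show x = W x • z + (x - W x • z) by abel]
    exact Submodule.add_mem _ (Submodule.smul_mem _ _ (Submodule.subset_span (by simp)))
      (Submodule.span_mono (Set.subset_insert _ _) hK)
  set b := Module.Basis.mk hli hsp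
  obtain rfl : d = k := by
    have := (Module.finrank_eq_card_basis b).symm.trans (Module.finrank_fin_fun ℤ)
    simpa using this
  exact ⟨b, by simp [b]⟩

lemma exists_isUnit_det_col_zero_eq {k : ℕ} {z : Fin (k + 1) → ℤ}
    (hz : ∀ (g : ℤ) (z' : Fin (k + 1) → ℤ), z = g • z' → IsUnit g) :
    ∃ M : Matrix (Fin (k + 1)) (Fin (k + 1)) ℤ, IsUnit M.det ∧ M.col 0 = z := by
  obtain ⟨u, hu⟩ := exists_dotProduct_eq_one hz
  obtain ⟨b, hb⟩ := exists_basis_zero_eq hu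
  let _ := (Pi.basisFun ℤ (Fin (k + 1))).invertibleToMatrix b
  refine ⟨(Pi.basisFun ℤ (Fin (k + 1))).toMatrix b, isUnit_det_of_invertible _, ?_⟩
  ext i
  rw [col_apply, Module.Basis.toMatrix_apply, hb, Pi.basisFun_repr]

/-- The conclusion of Minkowski's second theorem for the lattice `T ℤᵏ`, with constant `C`. -/
def HasShortIndependentVectors (C : ℝ) {k : ℕ} (T : Matrix (Fin k) (Fin k) ℝ) : Prop :=
  ∃ c : Fin k → Fin k → ℤ, LinearIndependent ℝ (fun i => realVec (c i)) ∧
    ∏ i, ‖T *ᵥ realVec (c i)‖ ≤ C * |T.det|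

lemma HasShortIndependentVectors.mono {C D : ℝ} {k : ℕ} {T : Matrix (Fin k) (Fin k) ℝ}
    (h : HasShortIndependentVectors C T) (hCD : C ≤ D) : HasShortIndependentVectors D T :=
  let ⟨c, hli, hprod⟩ := h
  ⟨c, hli, hprod.trans (mul_le_mul_of_nonneg_right hCD (abs_nonneg _))⟩

lemma HasShortIndependentVectors.of_mul_map_intCast {C : ℝ} {k : ℕ}
    {T : Matrix (Fin k) (Fin k) ℝ} {M : Matrix (Fin k) (Fin k) ℤ} (hM : IsUnit M.det)
    (h : HasShortIndependentVectors C (T * M.map (Int.cast : ℤ → ℝ))) :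
    HasShortIndependentVectors C T := by
  obtain ⟨c, hli, hprod⟩ := h
  have hinj : Function.Injective (M.map (Int.cast : ℤ → ℝ)).mulVec := by
    rw [mulVec_injective_iff_isUnit, isUnit_iff_isUnit_det, isUnit_iff_ne_zero, ← abs_pos,
      abs_det_map_intCast hM]
    exact one_pos
  refine ⟨fun i => M *ᵥ c i, ?_, ?_⟩
  · have := hli.map' (M.map (Int.cast : ℤ → ℝ)).mulVecLin (LinearMap.ker_eq_bot.2 hinj)
    simp only [realVec_mulVec]
    convert this using 1 <;> rfl
  · simpa only [realVec_mulVec, mulVec_mulVec, det_mul, abs_mul, abs_det_map_intCast hM,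
      mul_one] using hprod

/-- The matrix of the lattice `U ℤᵏ⁺¹` projected along its first column onto the coordinate
hyperplane `x_j = 0`, in the basis given by the remaining columns. -/
def projMinor {k : ℕ} (U : Matrix (Fin (k + 1)) (Fin (k + 1)) ℝ) (j : Fin (k + 1)) :
    Matrix (Fin k) (Fin k) ℝ :=
  Matrix.of fun a b => U (j.succAbove a) b.succ - U j b.succ / U j 0 * U (j.succAbove a) 0

lemma det_eq_projMinor {k : ℕ} (U : Matrix (Fin (k + 1)) (Fin (k + 1)) ℝ) {j : Fin (k + 1)}
    (hj : U j 0 ≠ 0) : U.det = (-1) ^ (j : ℕ) * U j 0 * (projMinor U j).det := by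
  set c : Fin (k + 1) → ℝ := Fin.cons 0 fun b => -(U j b.succ / U j 0)
  set A : Matrix (Fin (k + 1)) (Fin (k + 1)) ℝ := Matrix.of fun a b => U a b + c b * U a 0
  have hA : A.det = U.det := by
    rw [← det_transpose, ← det_transpose U]
    exact det_eq_of_forall_row_eq_smul_add_const c 0 rfl fun _ _ => rfl
  have hrow : ∀ b : Fin k, A j b.succ = 0 := fun b => by
    simp only [A, c, of_apply, Fin.cons_succ]
    rw [neg_mul, div_mul_cancel₀ _ hj, add_neg_cancel]
  rw [← hA, det_succ_row A j, Fin.sum_univ_succ, Finset.sum_eq_zero fun b _ => by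
    rw [hrow, mul_zero, zero_mul]]
  simp only [Fin.val_zero, add_zero, Fin.succAbove_zero, add_zero]
  congr 2
  · simp [A, c]
  · ext a b; simp [A, c, projMinor]; ring

lemma projMinor_mulVec {k : ℕ} (U : Matrix (Fin (k + 1)) (Fin (k + 1)) ℝ) (j : Fin (k + 1))
    (x : Fin k → ℝ) : projMinor U j *ᵥ x =
      (U *ᵥ Fin.cons 0 x - ((U *ᵥ Fin.cons 0 x) j / U j 0) • U.col 0) ∘ j.succAbove := by
  ext a
  simp only [mulVec, dotProduct, projMinor, of_apply, Fin.sum_univ_succ, Fin.cons_zero,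
    Fin.cons_succ, mul_zero, zero_add, Function.comp_apply, Pi.sub_apply, Pi.smul_apply,
    col_apply, smul_eq_mul, sub_mul, Finset.sum_sub_distrib, Finset.sum_div, Finset.sum_mul]
  congr 1
  exact Finset.sum_congr rfl fun b _ => by ring

lemma norm_projMinor_mulVec {k : ℕ} {U : Matrix (Fin (k + 1)) (Fin (k + 1)) ℝ}
    {j : Fin (k + 1)} (hj : U j 0 ≠ 0) (x : Fin k → ℝ) : ‖projMinor U j *ᵥ x‖ =
      ‖U *ᵥ Fin.cons 0 x - ((U *ᵥ Fin.cons 0 x) j / U j 0) • U.col 0‖ := by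
  rw [projMinor_mulVec, norm_comp_succAbove_of_eq_zero]
  simp [div_mul_cancel₀ _ hj]

lemma exists_norm_mulVec_cons_le {k : ℕ} {U : Matrix (Fin (k + 1)) (Fin (k + 1)) ℝ}
    {j : Fin (k + 1)} (hj : U j 0 ≠ 0) (q : Fin k → ℤ) :
    ∃ t : ℤ, ‖U *ᵥ realVec (Fin.cons t q)‖ ≤ ‖projMinor U j *ᵥ realVec q‖ + ‖U.col 0‖ / 2 := by
  set y := U *ᵥ Fin.cons 0 (realVec q)
  set s := y j / U j 0
  refine ⟨-round s, ?_⟩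
  have hcons : realVec (Fin.cons (-round s) q) =
      Fin.cons 0 (realVec q) + (-round s : ℝ) • Pi.single 0 1 := by
    ext i; refine Fin.cases ?_ (fun b => ?_) i <;> simp
  have hsplit : U *ᵥ realVec (Fin.cons (-round s) q) =
      (y - s • U.col 0) + (s - round s) • U.col 0 := by
    rw [hcons, mulVec_add, mulVec_smul, mulVec_single_one]; simp only [y]; module
  rw [hsplit, norm_projMinor_mulVec hj]
  refine (norm_add_le _ _).trans (add_le_add_right ?_ _)
  rw [norm_smul, Real.norm_eq_abs, div_eq_inv_mul, ← one_div]
  exact mul_le_mul_of_nonneg_right (abs_sub_round s) (norm_nonneg _)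

/-- The inductive step: project along a shortest lattice vector `U e₀` and lift back. -/
lemma HasShortIndependentVectors.succ {k : ℕ} {C : ℝ}
    (hC : ∀ T : Matrix (Fin k) (Fin k) ℝ, T.det ≠ 0 → HasShortIndependentVectors C T)
    {U : Matrix (Fin (k + 1)) (Fin (k + 1)) ℝ} (hU : U.det ≠ 0)
    (hmin : ∀ z : Fin (k + 1) → ℤ, z ≠ 0 → ‖U.col 0‖ ≤ ‖U *ᵥ realVec z‖) :
    HasShortIndependentVectors (2 ^ k * C) U := by
  set e₀ : Fin (k + 1) → ℤ := Pi.single 0 1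
  have he₀ : U *ᵥ realVec e₀ = U.col 0 := by
    rw [← mulVec_single_one]; congr 1; ext i; simp [e₀, Pi.single_apply]
  have hpos : 0 < ‖U.col 0‖ := he₀ ▸ norm_mulVec_realVec_pos U hU (by simp [e₀])
  obtain ⟨j, hj⟩ := exists_abs_eq_norm (U.col 0)
  have hj0 : U j 0 ≠ 0 := fun h => by rw [col_apply, h, abs_zero] at hj; linarith
  have hdet : |U.det| = ‖U.col 0‖ * |(projMinor U j).det| := by
    rw [det_eq_projMinor U hj0, abs_mul, abs_mul, abs_pow, abs_neg, abs_one, one_pow, one_mul,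
      ← hj, col_apply]
  obtain ⟨q, hqli, hqprod⟩ := hC (projMinor U j) fun h => hU (by simp [det_eq_projMinor U hj0, h])
  choose t ht using fun i => exists_norm_mulVec_cons_le hj0 (q i)
  have hlift : ∀ i,
      ‖U *ᵥ realVec (Fin.cons (t i) (q i))‖ ≤ 2 * ‖projMinor U j *ᵥ realVec (q i)‖ := by
    intro i
    have hne : (Fin.cons (t i) (q i) : Fin (k + 1) → ℤ) ≠ 0 := fun h =>
      hqli.ne_zero i (by ext b; simpa using congrFun h b.succ)
    linarith [ht i, hmin _ hne]
  refine ⟨Fin.cons e₀ fun i => Fin.cons (t i) (q i), ?_, ?_⟩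
  · change LinearIndependent ℝ (realVec ∘ Fin.cons _ _)
    rw [Fin.comp_cons]
    refine linearIndependent_finCons_of_map_eq_zero (LinearMap.funLeft ℝ ℝ Fin.succ) ?_
      (by simp [e₀]) ?_
    · simpa [Function.comp_def, realVec_funLeft_succ_cons] using hqli
    · ext i; simp [e₀, LinearMap.funLeft_apply, Fin.succ_ne_zero]
  · calc ∏ i, ‖U *ᵥ realVec ((Fin.cons e₀ fun i => Fin.cons (t i) (q i) :
            Fin (k + 1) → Fin (k + 1) → ℤ) i)‖
        = ‖U.col 0‖ * ∏ i, ‖U *ᵥ realVec (Fin.cons (t i) (q i))‖ := by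
          rw [Fin.prod_univ_succ]; simp [he₀]
      _ ≤ ‖U.col 0‖ * ∏ i, (2 * ‖projMinor U j *ᵥ realVec (q i)‖) := by
          gcongr with i; exact hlift i
      _ = 2 ^ k * (‖U.col 0‖ * ∏ i, ‖projMinor U j *ᵥ realVec (q i)‖) := by
          rw [Finset.prod_mul_distrib, Finset.prod_const, Finset.card_univ, Fintype.card_fin]; ring
      _ ≤ 2 ^ k * (‖U.col 0‖ * (C * |(projMinor U j).det|)) := by gcongr
      _ = 2 ^ k * C * |U.det| := by rw [hdet]; ring

/-- A weak form of Minkowski's second theorem for the sup norm. -/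
theorem hasShortIndependentVectors :
    ∀ {k : ℕ} (T : Matrix (Fin k) (Fin k) ℝ), T.det ≠ 0 →
      HasShortIndependentVectors (2 ^ (k * k)) T
  | 0, T, _ => ⟨fun _ => 0, linearIndependent_empty_type, by simp⟩
  | k + 1, T, hT => by
    obtain ⟨z, hz, hmin⟩ := exists_forall_norm_mulVec_le T hT
    obtain ⟨M, hM, hMz⟩ := exists_isUnit_det_col_zero_eq fun g z' h =>
      isUnit_of_eq_smul_of_forall_norm_mulVec_le hT hz hmin h
    refine .of_mul_map_intCast hM (HasShortIndependentVectors.mono (C := 2 ^ k * 2 ^ (k * k)) ?_ ?_)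
    · refine .succ (fun T' hT' => hasShortIndependentVectors T' hT') ?_ fun z' hz' => ?_
      · rw [det_mul, ← Int.cast_det]
        exact mul_ne_zero hT (Int.cast_ne_zero.2 hM.ne_zero)
      · have hcol : (T * M.map (Int.cast : ℤ → ℝ)).col 0 = T *ᵥ realVec z := by
          ext a; simp [mul_apply, mulVec, dotProduct, ← hMz]
        rw [hcol, ← mulVec_mulVec, ← realVec_mulVec]
        exact hmin _ (mulVec_ne_zero_of_isUnit_det hM hz')
    · rw [← pow_add]
      exact pow_le_pow_right₀ (by norm_num) (by nlinarith)

lemma minForm_le_linForm {m : ℕ} (ξ : Fin m → ℝ) {Q : ℝ} {b : Fin (m + 1) → ℤ}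
    (hb : hat b ≠ 0) (hbQ : ‖hat b‖ ≤ Q) : minForm ξ Q ≤ linForm ξ b :=
  csInf_le ⟨0, by rintro _ ⟨b', -, -, rfl⟩; exact abs_nonneg _⟩ ⟨b, hb, hbQ, rfl⟩

lemma eventually_rpow_neg_lt_linForm {m : ℕ} {ξ : Fin m → ℝ} (hω : oexp ξ ≤ (m : ℝ))
    {δ : ℝ} (hδ : 0 < δ) :
    ∀ᶠ S : ℝ in atTop, ∀ b : Fin (m + 1) → ℤ, hat b ≠ 0 → ‖hat b‖ ≤ S →
      S ^ (-(m + δ)) < linForm ξ b := by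
  have hnot : ¬ ∃ C : ℝ, ∃ᶠ S : ℝ in atTop, S ^ ((m : ℝ) + δ) * minForm ξ S ≤ C := by
    rintro ⟨C, hC⟩
    have hle : (((m : ℝ) + δ : ℝ) : EReal) ≤ oexp ξ := by
      unfold oexp; exact le_sSup ⟨(m : ℝ) + δ, rfl, by positivity, C, hC⟩
    replace hle := hle.trans hω
    norm_cast at hle
    linarith
  simp only [not_exists, not_frequently, not_le] at hnot
  filter_upwards [hnot 1, eventually_gt_atTop 0] with S hS hS0 b hb hbS
  rw [Real.rpow_neg hS0.le, inv_lt_iff_one_lt_mul₀ (by positivity), mul_comm]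
  exact hS.trans_le (mul_le_mul_of_nonneg_left (minForm_le_linForm ξ hb hbS)
    (Real.rpow_nonneg hS0.le _))

lemma linForm_eq_of_hat_eq_zero {m : ℕ} (ξ : Fin m → ℝ) {c : Fin (m + 1) → ℤ} (hc : hat c = 0) :
    linForm ξ c = |(c (Fin.last m) : ℝ)| := by
  have hc' : ∀ i : Fin m, c i.castSucc = 0 := fun i => congrFun hc i
  simp [linForm, Fin.sum_univ_castSucc, hc', star]

/-- The lattice `approxMatrix ξ S ℤᵐ⁺¹` has covolume one; its short vectors are the integer
vectors `c` with `‖ĉ‖ ≲ S` and `|c · ξ*| ≲ S⁻ᵐ`. -/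
def approxMatrix {m : ℕ} (ξ : Fin m → ℝ) (S : ℝ) : Matrix (Fin (m + 1)) (Fin (m + 1)) ℝ :=
  Matrix.of fun a b => if a = Fin.last m then S ^ m * star ξ b else if a = b then S⁻¹ else 0

lemma det_approxMatrix {m : ℕ} (ξ : Fin m → ℝ) {S : ℝ} (hS : S ≠ 0) :
    (approxMatrix ξ S).det = 1 := by
  have htri : (approxMatrix ξ S).IsLowerTriangular := fun a b (hab : a < b) => by
    simp [approxMatrix, (hab.trans_le (Fin.le_last b)).ne, hab.ne]
  rw [det_of_isLowerTriangular _ htri, Fin.prod_univ_castSucc]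
  simp [approxMatrix, (Fin.castSucc_lt_last _).ne, star, hS]

lemma approxMatrix_mulVec_last {m : ℕ} (ξ : Fin m → ℝ) (S : ℝ) (c : Fin (m + 1) → ℤ) :
    (approxMatrix ξ S *ᵥ realVec c) (Fin.last m) = S ^ m * ∑ i, (c i : ℝ) * star ξ i := by
  simp only [approxMatrix, mulVec, dotProduct, of_apply, if_true, realVec_apply, Finset.mul_sum]
  exact Finset.sum_congr rfl fun _ _ => by ring

lemma approxMatrix_mulVec_castSucc {m : ℕ} (ξ : Fin m → ℝ) (S : ℝ) (c : Fin (m + 1) → ℤ)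
    (i : Fin m) : (approxMatrix ξ S *ᵥ realVec c) i.castSucc = S⁻¹ * c i.castSucc := by
  simp [approxMatrix, mulVec, dotProduct, (Fin.castSucc_lt_last i).ne]

lemma pow_mul_linForm_le_norm_mulVec {m : ℕ} (ξ : Fin m → ℝ) {S : ℝ} (hS : 0 ≤ S)
    (c : Fin (m + 1) → ℤ) : S ^ m * linForm ξ c ≤ ‖approxMatrix ξ S *ᵥ realVec c‖ := by
  have := norm_le_pi_norm (approxMatrix ξ S *ᵥ realVec c) (Fin.last m)
  rwa [approxMatrix_mulVec_last, Real.norm_eq_abs, abs_mul, abs_of_nonneg (by positivity)] at this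

lemma norm_hat_le_mul_norm_mulVec {m : ℕ} (ξ : Fin m → ℝ) {S : ℝ} (hS : 0 < S)
    (c : Fin (m + 1) → ℤ) : ‖hat c‖ ≤ S * ‖approxMatrix ξ S *ᵥ realVec c‖ := by
  refine (pi_norm_le_iff_of_nonneg (by positivity)).2 fun i => ?_
  have := norm_le_pi_norm (approxMatrix ξ S *ᵥ realVec c) i.castSucc
  rw [approxMatrix_mulVec_castSucc, norm_mul, norm_inv, Real.norm_of_nonneg hS.le,
    Int.norm_cast_real, inv_mul_le_iff₀ hS] at this
  exact this

lemma rpow_neg_le_norm_approxMatrix_mulVec {m : ℕ} {ξ : Fin m → ℝ} {S δ : ℝ} (hS : 1 ≤ S)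
    (hδ : 0 ≤ δ)
    (h : ∀ b : Fin (m + 1) → ℤ, hat b ≠ 0 → ‖hat b‖ ≤ S → S ^ (-(m + δ)) ≤ linForm ξ b)
    {c : Fin (m + 1) → ℤ} (hc : c ≠ 0) : S ^ (-δ) ≤ ‖approxMatrix ξ S *ᵥ realVec c‖ := by
  have hS0 : 0 < S := one_pos.trans_le hS
  have hβ : S ^ (-δ) ≤ 1 := Real.rpow_le_one_of_one_le_of_nonpos hS (neg_nonpos.2 hδ)
  by_cases hhat : hat c = 0
  · have hlast : c (Fin.last m) ≠ 0 := fun h0 => hc <| funext fun i =>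
      Fin.lastCases h0 (fun i => congrFun hhat i) i
    have h1 : 1 ≤ linForm ξ c := by
      rw [linForm_eq_of_hat_eq_zero ξ hhat, ← Int.cast_abs]
      exact_mod_cast Int.one_le_abs hlast
    calc S ^ (-δ) ≤ 1 := hβ
      _ ≤ S ^ m * linForm ξ c := one_le_mul_of_one_le_of_one_le (one_le_pow₀ hS) h1
      _ ≤ _ := pow_mul_linForm_le_norm_mulVec ξ hS0.le c
  by_cases hsmall : ‖hat c‖ ≤ S
  · calc S ^ (-δ) = S ^ m * S ^ (-(m + δ)) := by
          rw [← Real.rpow_natCast, ← Real.rpow_add hS0]; ring_nf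
      _ ≤ S ^ m * linForm ξ c := by gcongr; exact h c hhat hsmall
      _ ≤ _ := pow_mul_linForm_le_norm_mulVec ξ hS0.le c
  · have := norm_hat_le_mul_norm_mulVec ξ hS0 c
    nlinarith

lemma le_div_pow_of_prod_le {k : ℕ} {N : Fin (k + 1) → ℝ} {β C : ℝ} (hβ : 0 < β)
    (hN : ∀ i, β ≤ N i) (hprod : ∏ i, N i ≤ C) (i : Fin (k + 1)) : N i ≤ C / β ^ k := by
  rw [le_div_iff₀ (pow_pos hβ k)]
  calc N i * β ^ k = N i * ∏ _j ∈ Finset.univ.erase i, β := by simp [Finset.card_erase_of_mem]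
    _ ≤ N i * ∏ j ∈ Finset.univ.erase i, N j :=
        mul_le_mul_of_nonneg_left (Finset.prod_le_prod (fun _ _ => hβ.le) fun j _ => hN j)
          (hβ.le.trans (hN i))
    _ = ∏ j, N j := Finset.mul_prod_erase _ _ (Finset.mem_univ i)
    _ ≤ C := hprod

lemma exists_independent_of_forall_rpow_neg_le {m : ℕ} {ξ : Fin m → ℝ} {S δ : ℝ}
    (hS : 1 ≤ S) (hδ : 0 ≤ δ)
    (h : ∀ b : Fin (m + 1) → ℤ, hat b ≠ 0 → ‖hat b‖ ≤ S → S ^ (-(m + δ)) ≤ linForm ξ b) :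
    ∃ u : Fin (m + 1) → Fin (m + 1) → ℤ, LinearIndependent ℝ (fun i => realVec (u i)) ∧
      ∀ i, ‖hat (u i)‖ ≤ 2 ^ ((m + 1) * (m + 1)) * S ^ (1 + m * δ) ∧
        linForm ξ (u i) ≤ 2 ^ ((m + 1) * (m + 1)) * S ^ (m * δ - m) := by
  have hS0 : 0 < S := one_pos.trans_le hS
  obtain ⟨u, hli, hprod⟩ := hasShortIndependentVectors (approxMatrix ξ S)
    (by simp [det_approxMatrix ξ hS0.ne'])
  rw [det_approxMatrix ξ hS0.ne', abs_one, mul_one] at hprod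
  have hN : ∀ i, ‖approxMatrix ξ S *ᵥ realVec (u i)‖ ≤ 2 ^ ((m + 1) * (m + 1)) * S ^ (m * δ) := by
    intro i
    have hβ : (S ^ (-δ)) ^ m = (S ^ (m * δ))⁻¹ := by
      rw [← Real.rpow_natCast, ← Real.rpow_mul hS0.le, ← Real.rpow_neg hS0.le]; ring_nf
    have := le_div_pow_of_prod_le (Real.rpow_pos_of_pos hS0 _)
      (fun i => rpow_neg_le_norm_approxMatrix_mulVec hS hδ h (by simpa using hli.ne_zero i))
      hprod i
    rwa [hβ, div_inv_eq_mul] at this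
  refine ⟨u, hli, fun i => ⟨?_, ?_⟩⟩
  · calc ‖hat (u i)‖ ≤ S * ‖approxMatrix ξ S *ᵥ realVec (u i)‖ :=
          norm_hat_le_mul_norm_mulVec ξ hS0 _
      _ ≤ S * (2 ^ ((m + 1) * (m + 1)) * S ^ (m * δ)) := by gcongr; exact hN i
      _ = _ := by rw [Real.rpow_add hS0, Real.rpow_one]; ring
  · have hSm : 0 < S ^ m := pow_pos hS0 m
    calc linForm ξ (u i) ≤ ‖approxMatrix ξ S *ᵥ realVec (u i)‖ / S ^ m := by
          rw [le_div_iff₀ hSm, mul_comm]; exact pow_mul_linForm_le_norm_mulVec ξ hS0.le _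
      _ ≤ 2 ^ ((m + 1) * (m + 1)) * S ^ (m * δ) / S ^ m := by gcongr; exact hN i
      _ = _ := by rw [Real.rpow_sub hS0, Real.rpow_natCast]; ring

lemma eventually_const_mul_rpow_le (C : ℝ) {a b : ℝ} (hab : a < b) :
    ∀ᶠ Q : ℝ in atTop, C * Q ^ a ≤ Q ^ b := by
  filter_upwards [(tendsto_rpow_atTop (sub_pos.2 hab)).eventually_ge_atTop C,
    eventually_gt_atTop 0] with Q hQ hQ0
  calc C * Q ^ a ≤ Q ^ (b - a) * Q ^ a := by gcongr
    _ = Q ^ b := by rw [← Real.rpow_add hQ0]; ring_nf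

/-- Exponents for the scale `S = Q^τ`: the loss `S^{mδ}` in the bound for the lattice vectors
must stay below `Q^ε`. -/
lemma exists_scale_exponents {m ε : ℝ} (hm : 0 ≤ m) (hε : 0 < ε) :
    ∃ τ δ : ℝ, 0 < τ ∧ 0 < δ ∧ τ * (1 + m * δ) < 1 ∧ τ * (m * δ - m) < -m + ε := by
  set δ := ε / (2 * (m + 1) ^ 2)
  have hδ : 0 < δ := by positivity
  have hδε : 2 * (m + 1) ^ 2 * δ = ε := by simp only [δ]; field_simp
  have hD : 0 < 1 + (m + 1) * δ := by positivity
  refine ⟨1 / (1 + (m + 1) * δ), δ, by positivity, hδ, ?_, ?_⟩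
  · rw [one_div_mul_eq_div, div_lt_one hD]; linarith
  · rw [one_div_mul_eq_div, div_lt_iff₀ hD]; nlinarith [mul_pos hε hδ, mul_nonneg hm hδ.le]

theorem eventually_exists_independent_approx {m : ℕ} {ξ : Fin m → ℝ} (hω : oexp ξ ≤ (m : ℝ))
    {ε : ℝ} (hε : 0 < ε) :
    ∀ᶠ Q : ℝ in atTop, ∃ u : Fin (m + 1) → Fin (m + 1) → ℤ,
      LinearIndependent ℝ (fun i => realVec (u i)) ∧
        ∀ i, ‖hat (u i)‖ ≤ Q ∧ linForm ξ (u i) ≤ Q ^ (-(m : ℝ) + ε) := by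
  obtain ⟨τ, δ, hτ, hδ, hhat, hlin⟩ := exists_scale_exponents (Nat.cast_nonneg m) hε
  have hS := tendsto_rpow_atTop hτ
  filter_upwards [hS.eventually (eventually_rpow_neg_lt_linForm hω hδ),
    hS.eventually (eventually_ge_atTop 1), eventually_const_mul_rpow_le _ hhat,
    eventually_const_mul_rpow_le _ hlin, eventually_gt_atTop 0]
    with Q hgood hQ1 hQhat hQlin hQ0
  obtain ⟨u, hli, hu⟩ :=
    exists_independent_of_forall_rpow_neg_le hQ1 hδ.le fun b hb hbS => (hgood b hb hbS).le
  refine ⟨u, hli, fun i => ⟨(hu i).1.trans ?_, (hu i).2.trans ?_⟩⟩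
  · rw [← Real.rpow_mul hQ0.le]; simpa using hQhat
  · rw [← Real.rpow_mul hQ0.le]; exact hQlin

/-- if `n ≥ 3`, `ω(ξ₃,…,ξₙ) = n − 2` and `ε > 0`, then for all
large `Q` there are `n − 1` linearly independent integer vectors
`u ∈ ℤ^{n−1}` with `‖û‖ ≤ Q` and `|u·(ξ₃,…,ξₙ,1)| ≤ Q^{−(n−2)+ε}`. -/
theorem exists_independent_approx (n : ℕ) (hn : 3 ≤ n) (ξ : Fin (n - 2) → ℝ)
    (hω : oexp ξ = (((n - 2 : ℕ) : ℝ) : EReal)) (ε : ℝ) (hε : 0 < ε) :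
    ∃ Q₀ : ℝ, ∀ Q : ℝ, Q₀ ≤ Q →
      ∃ u : Fin (n - 1) → Fin (n - 2 + 1) → ℤ,
        LinearIndependent ℝ (fun i => realVec (u i)) ∧
        ∀ i, ‖hat (u i)‖ ≤ Q ∧ linForm ξ (u i) ≤ Q ^ (-((n : ℝ) - 2) + ε) := by
  obtain ⟨Q₀, hQ₀⟩ := eventually_atTop.1 (eventually_exists_independent_approx hω.le hε)
  have hn1 : n - 1 = n - 2 + 1 := by omega
  have hexp : -(((n - 2 : ℕ) : ℝ)) + ε = -((n : ℝ) - 2) + ε := by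
    rw [Nat.cast_sub (by omega : 2 ≤ n), Nat.cast_ofNat]
  refine ⟨Q₀, fun Q hQ => ?_⟩
  obtain ⟨u, hli, hu⟩ := hQ₀ Q hQ
  exact ⟨u ∘ finCongr hn1, hli.comp _ (finCongr hn1).injective, fun i => hexp ▸ hu _⟩

end BestApprox
end
end
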